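/- If fh ≡ 1+2i (mod 4ℤ[i]), then {1, (1+γ)/(1+i)} is a ℤ[i]-module basis of O_M and the relative discriminant ideal of M/K is generated by 2fh. -/

import Mathlib

/-!
Write `d = fh = 1 + 2i + 4m` and `θ = (1 + γ)/(1 + i)`. Then `θ² = (1 - i)θ + (1 - 2im)`, so `θ` is
integral. Conversely, an integral `x = a + bγ` has trace `2a` and norm `a² - d b²` in `ℤ[i]`; as `d`
is squarefree, also `2b ∈ ℤ[i]`, and `s = 2a`, `t = 2b` satisfy `s² ≡ t² d (mod 4)`. Reducing mod 4
with `d ≡ 1 + 2i` forces `(1 - i) ∣ t` and `2 ∣ s - t`, which is exactly `x ∈ ℤ[i] + ℤ[i]θ`.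
The discriminant of `(1, θ)` is `4d/(1 + i)² = -2i·d`, and two `ℤ[i]`-bases have discriminants
differing by the square of a unit.
-/

open Polynomial

theorem isIntegral_of_sq_eq {R A : Type*} [CommRing R] [Ring A] [Algebra R A] {x : A} {p q : R}
    (h : x ^ 2 = algebraMap R A p * x + algebraMap R A q) : IsIntegral R x :=
  ⟨X ^ 2 - (C p * X + C q), monic_X_pow_sub degree_linear_lt, by simp [h]⟩

section QuadraticExtension

variable {K M : Type*} [Field K] [Field M] [Algebra K M] {γ : M} {d : K}

theorem notMem_range_algebraMap_of_adjoin_eq_top (hdim : Module.finrank K M = 2)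
    (hgen : Algebra.adjoin K {γ} = ⊤) : γ ∉ Set.range (algebraMap K M) := by
  rintro ⟨k, rfl⟩
  have hbot : (⊥ : Subalgebra K M) = ⊤ := by
    rw [← hgen, eq_comm, ← le_bot_iff, Algebra.adjoin_le_iff, Set.singleton_subset_iff]
    exact Subalgebra.algebraMap_mem _ k
  have := Subalgebra.bot_eq_top_iff_finrank_eq_one.mp hbot
  omega

theorem linearIndependent_one_of_notMem_range (hγ : γ ∉ Set.range (algebraMap K M)) :
    LinearIndependent K ![1, γ] := by
  rw [LinearIndependent.pair_iff' one_ne_zero]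
  exact fun a ha => hγ ⟨a, by rw [Algebra.algebraMap_eq_smul_one, ha]⟩

noncomputable def basisOneOfNotMemRange (hdim : Module.finrank K M = 2)
    (hγ : γ ∉ Set.range (algebraMap K M)) : Module.Basis (Fin 2) K M :=
  basisOfLinearIndependentOfCardEqFinrank (linearIndependent_one_of_notMem_range hγ)
    (by simp [hdim])

theorem coe_basisOneOfNotMemRange (hdim : Module.finrank K M = 2)
    (hγ : γ ∉ Set.range (algebraMap K M)) : ⇑(basisOneOfNotMemRange hdim hγ) = ![1, γ] :=
  coe_basisOfLinearIndependentOfCardEqFinrank _ _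

theorem basisOneOfNotMemRange_repr (hdim : Module.finrank K M = 2)
    (hγ : γ ∉ Set.range (algebraMap K M)) (a b : K) :
    (basisOneOfNotMemRange hdim hγ).repr (algebraMap K M a + algebraMap K M b * γ) = ![a, b] := by
  have : algebraMap K M a + algebraMap K M b * γ =
      ∑ j, ![a, b] j • basisOneOfNotMemRange hdim hγ j := by
    simp [Fin.sum_univ_two, coe_basisOneOfNotMemRange, Algebra.smul_def]
  rw [this, Module.Basis.repr_sum_self]

theorem exists_eq_algebraMap_add_algebraMap_mul (hdim : Module.finrank K M = 2)
    (hγ : γ ∉ Set.range (algebraMap K M)) (x : M) :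
    ∃ a b : K, x = algebraMap K M a + algebraMap K M b * γ := by
  set B := basisOneOfNotMemRange hdim hγ
  refine ⟨B.repr x 0, B.repr x 1, ?_⟩
  conv_lhs => rw [← B.sum_repr x]
  simp [B, Fin.sum_univ_two, coe_basisOneOfNotMemRange, Algebra.smul_def]

theorem leftMulMatrix_algebraMap_add_algebraMap_mul (hdim : Module.finrank K M = 2)
    (hγ : γ ∉ Set.range (algebraMap K M)) (hγd : γ ^ 2 = algebraMap K M d) (a b : K) :
    Algebra.leftMulMatrix (basisOneOfNotMemRange hdim hγ)
      (algebraMap K M a + algebraMap K M b * γ) = !![a, d * b; b, a] := by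
  have hmulγ : (algebraMap K M a + algebraMap K M b * γ) * γ =
      algebraMap K M (d * b) + algebraMap K M a * γ := by
    rw [map_mul]
    linear_combination algebraMap K M b * hγd
  have h0 := basisOneOfNotMemRange_repr hdim hγ a b
  have h1 := basisOneOfNotMemRange_repr hdim hγ (d * b) a
  rw [← hmulγ] at h1
  ext i j
  rw [Algebra.leftMulMatrix_eq_repr_mul, coe_basisOneOfNotMemRange]
  fin_cases i <;> fin_cases j <;>
    simp only [Fin.zero_eta, Fin.mk_one, Matrix.cons_val_zero, Matrix.cons_val_one, mul_one,
      h0, h1] <;> rfl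

theorem trace_algebraMap_add_algebraMap_mul (hdim : Module.finrank K M = 2)
    (hγ : γ ∉ Set.range (algebraMap K M)) (hγd : γ ^ 2 = algebraMap K M d) (a b : K) :
    Algebra.trace K M (algebraMap K M a + algebraMap K M b * γ) = 2 * a := by
  rw [Algebra.trace_eq_matrix_trace (basisOneOfNotMemRange hdim hγ),
    leftMulMatrix_algebraMap_add_algebraMap_mul hdim hγ hγd, Matrix.trace_fin_two_of]
  ring

theorem norm_algebraMap_add_algebraMap_mul (hdim : Module.finrank K M = 2)
    (hγ : γ ∉ Set.range (algebraMap K M)) (hγd : γ ^ 2 = algebraMap K M d) (a b : K) :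
    Algebra.norm K (algebraMap K M a + algebraMap K M b * γ) = a ^ 2 - d * b ^ 2 := by
  rw [Algebra.norm_eq_matrix_det (basisOneOfNotMemRange hdim hγ),
    leftMulMatrix_algebraMap_add_algebraMap_mul hdim hγ hγd, Matrix.det_fin_two_of]
  ring

theorem discr_one_algebraMap_add_algebraMap_mul (hdim : Module.finrank K M = 2)
    (hγ : γ ∉ Set.range (algebraMap K M)) (hγd : γ ^ 2 = algebraMap K M d) (p q : K) :
    Algebra.discr K ![1, algebraMap K M p + algebraMap K M q * γ] = 4 * d * q ^ 2 := by
  have htr := trace_algebraMap_add_algebraMap_mul hdim hγ hγd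
  have hsq : (algebraMap K M p + algebraMap K M q * γ) * (algebraMap K M p + algebraMap K M q * γ)
      = algebraMap K M (p ^ 2 + d * q ^ 2) + algebraMap K M (2 * p * q) * γ := by
    simp only [map_add, map_mul, map_pow, map_ofNat]
    linear_combination (algebraMap K M q) ^ 2 * hγd
  have h1 : (1 : M) = algebraMap K M 1 + algebraMap K M 0 * γ := by simp
  rw [Algebra.discr_def, Matrix.det_fin_two]
  simp only [Algebra.traceMatrix_apply, Algebra.traceForm_apply, Matrix.cons_val_zero,
    Matrix.cons_val_one, one_mul, mul_one, hsq, htr]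
  rw [h1, htr]
  ring

end QuadraticExtension

section IntegrallyClosed

variable {R K M : Type*} [CommRing R] [Field K] [Algebra R K] [IsFractionRing R K]

theorem algebraMap_injective_of_isFractionRing [Field M] [Algebra K M] [Algebra R M]
    [IsScalarTower R K M] : Function.Injective (algebraMap R M) := by
  rw [IsScalarTower.algebraMap_eq R K M]
  exact (algebraMap K M).injective.comp (IsFractionRing.injective R K)

theorem exists_algebraMap_eq_of_sq_mul_squarefree [IsDomain R] [IsIntegrallyClosed R]
    [DecompositionMonoid R] {d w : R} (hd : Squarefree d) {y : K}
    (hy : y ^ 2 * algebraMap R K d = algebraMap R K w) : ∃ r : R, algebraMap R K r = y := by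
  have hint : IsIntegral R (y * algebraMap R K d) := by
    refine IsIntegral.of_pow two_pos ?_
    rw [mul_pow, sq (algebraMap R K d), ← mul_assoc, hy, ← map_mul]
    exact isIntegral_algebraMap
  obtain ⟨r, hr⟩ := IsIntegrallyClosed.isIntegral_iff.mp hint
  have hr2 : r ^ 2 = w * d := IsFractionRing.injective R K <| by
    rw [map_pow, hr, map_mul, ← hy]
    ring
  obtain ⟨r', rfl⟩ := (hd.dvd_pow_iff_dvd two_ne_zero).mp ⟨w, by rw [hr2, mul_comm]⟩
  have hd0 : algebraMap R K d ≠ 0 :=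
    (map_ne_zero_iff _ (IsFractionRing.injective R K)).mpr hd.ne_zero
  exact ⟨r', mul_right_cancel₀ hd0 (by rw [← map_mul, mul_comm, hr])⟩

theorem exists_two_mul_eq_of_isIntegral [IsDomain R] [IsIntegrallyClosed R]
    [DecompositionMonoid R] [Field M] [Algebra K M] [Algebra R M] [IsScalarTower R K M]
    (hdim : Module.finrank K M = 2) {γ : M} (hγ : γ ∉ Set.range (algebraMap K M)) {d : R}
    (hd : Squarefree d) (hγd : γ ^ 2 = algebraMap R M d) {x : M} (hx : IsIntegral R x) :
    ∃ s t : R, 4 ∣ s ^ 2 - t ^ 2 * d ∧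
      algebraMap R M 2 * x = algebraMap R M s + algebraMap R M t * γ := by
  have := Module.finite_of_finrank_eq_succ hdim
  have hγd' : γ ^ 2 = algebraMap K M (algebraMap R K d) := by
    rw [hγd, IsScalarTower.algebraMap_apply R K M]
  obtain ⟨a, b, rfl⟩ := exists_eq_algebraMap_add_algebraMap_mul hdim hγ x
  obtain ⟨s, hs⟩ : ∃ s : R, algebraMap R K s = 2 * a := by
    rw [← trace_algebraMap_add_algebraMap_mul hdim hγ hγd']
    exact IsIntegrallyClosed.isIntegral_iff.mp (Algebra.isIntegral_trace hx)
  obtain ⟨n, hn⟩ : ∃ n : R, algebraMap R K n = a ^ 2 - algebraMap R K d * b ^ 2 := by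
    rw [← norm_algebraMap_add_algebraMap_mul hdim hγ hγd']
    exact IsIntegrallyClosed.isIntegral_iff.mp (Algebra.isIntegral_norm K hx)
  obtain ⟨t, ht⟩ := exists_algebraMap_eq_of_sq_mul_squarefree (y := 2 * b) (w := s ^ 2 - 4 * n)
    hd (by simp only [map_sub, map_mul, map_pow, map_ofNat, hs, hn]; ring)
  refine ⟨s, t, ⟨n, IsFractionRing.injective R K ?_⟩, ?_⟩
  · simp only [map_sub, map_mul, map_pow, map_ofNat, hs, ht, hn]
    ring
  · simp only [IsScalarTower.algebraMap_apply R K M, hs, ht, map_ofNat, map_mul]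
    ring

theorem span_singleton_eq_of_algebraMap_eq_discr [CommRing M] [Algebra K M] [Algebra R M]
    [IsScalarTower R K M] {S : Subalgebra R M} {ι : Type*} [Fintype ι] [DecidableEq ι]
    (b b' : Module.Basis ι R S) {D D' : R}
    (hD : algebraMap R K D = Algebra.discr K (b · : ι → M))
    (hD' : algebraMap R K D' = Algebra.discr K (b' · : ι → M)) :
    Ideal.span {D'} = Ideal.span {D} := by
  set T := b.toMatrix b'
  have hvec : (b' · : ι → M) =
      Matrix.vecMul (b · : ι → M) ((T.map (algebraMap R K)).map (algebraMap K M)) := by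
    funext j
    rw [← b.sum_toMatrix_smul_self b' j]
    simp only [Matrix.vecMul, dotProduct, Matrix.map_apply, ← IsScalarTower.algebraMap_apply,
      AddSubmonoidClass.coe_finsetSum, Algebra.smul_def, Subalgebra.coe_mul,
      Subalgebra.coe_algebraMap, T, mul_comm]
  have hdet : D' = T.det ^ 2 * D := IsFractionRing.injective R K <| by
    rw [hD', hvec, Algebra.discr_of_matrix_vecMul, ← hD, map_mul, map_pow, RingHom.map_det,
      RingHom.mapMatrix_apply]
  rw [hdet, Ideal.span_singleton_mul_left_unit]
  exact (Matrix.isUnit_det_of_right_inverse (b.toMatrix_mul_toMatrix_flip b')).pow 2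

end IntegrallyClosed

theorem Int.two_dvd_iff_two_mul_intCast_zmod_four (n : ℤ) : 2 ∣ n ↔ 2 * (n : ZMod 4) = 0 := by
  have h := ZMod.intCast_zmod_eq_zero_iff_dvd (2 * n) 4
  push_cast at h
  rw [h]
  omega

namespace GaussianInt

local notation "i" => (Zsqrtd.sqrtd : GaussianInt)

theorem sqrtd_mul_sqrtd : i * i = -1 := by decide

theorem dvd_of_four_dvd_sq_sub_sq_mul {g s t : GaussianInt} (hg : 4 ∣ g - (1 + 2 * i))
    (h : 4 ∣ s ^ 2 - t ^ 2 * g) : 1 - i ∣ t ∧ 2 ∣ s - t := by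
  have h' : ((4 : ℤ) : GaussianInt) ∣ s ^ 2 - t ^ 2 * (1 + 2 * i) := by
    convert dvd_add h (dvd_mul_of_dvd_right hg (t ^ 2)) using 1 <;> ring
  rw [Zsqrtd.intCast_dvd] at h'
  obtain ⟨hre, him⟩ := h'
  replace hre := (ZMod.intCast_zmod_eq_zero_iff_dvd _ 4).mpr (by exact_mod_cast hre)
  replace him := (ZMod.intCast_zmod_eq_zero_iff_dvd _ 4).mpr (by exact_mod_cast him)
  simp only [sq, Zsqrtd.re_sub, Zsqrtd.im_sub, Zsqrtd.re_mul, Zsqrtd.im_mul, Zsqrtd.re_add,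
    Zsqrtd.im_add, Zsqrtd.re_one, Zsqrtd.im_one, Zsqrtd.re_ofNat, Zsqrtd.im_ofNat,
    Zsqrtd.re_sqrtd, Zsqrtd.im_sqrtd] at hre him
  push_cast at hre him
  -- real and imaginary part of `s ^ 2 - t ^ 2 * (1 + 2 * i)` for `s = a + b i`, `t = p + q i`
  have key : ∀ a b p q : ZMod 4, a ^ 2 - b ^ 2 - (p ^ 2 - q ^ 2 - 4 * p * q) = 0 →
      2 * a * b - 2 * p * q - 2 * (p ^ 2 - q ^ 2) = 0 →
      2 * (p + q) = 0 ∧ 2 * (a - p) = 0 ∧ 2 * (b - q) = 0 := by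
    decide
  obtain ⟨hpq, hs, ht⟩ := key s.re s.im t.re t.im (by linear_combination hre)
    (by linear_combination him)
  obtain ⟨k, hk⟩ := (Int.two_dvd_iff_two_mul_intCast_zmod_four (t.re + t.im)).mpr
    (by push_cast; exact hpq)
  refine ⟨⟨⟨t.re - k, k⟩, ?_⟩, ?_⟩
  · ext <;> simp; omega
  · rw [show (2 : GaussianInt) = ((2 : ℤ) : GaussianInt) by norm_num, Zsqrtd.intCast_dvd]
    simp only [Zsqrtd.re_sub, Zsqrtd.im_sub, Int.two_dvd_iff_two_mul_intCast_zmod_four]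
    push_cast
    exact ⟨hs, ht⟩

theorem isIntegral_of_one_add_I_mul_eq {M : Type*} [Field M] [Algebra GaussianInt M]
    (hinj : Function.Injective (algebraMap GaussianInt M)) {γ θ : M} {d : GaussianInt}
    (hd : 4 ∣ d - (1 + 2 * i)) (hγ : γ ^ 2 = algebraMap GaussianInt M d)
    (hθ : algebraMap GaussianInt M (1 + i) * θ = 1 + γ) : IsIntegral GaussianInt θ := by
  obtain ⟨m, hm⟩ := hd
  refine isIntegral_of_sq_eq (p := 1 - i) (q := 1 - 2 * i * m) ?_
  have h0 : algebraMap GaussianInt M ((1 + i) ^ 2) ≠ 0 := (map_ne_zero_iff _ hinj).mpr (by decide)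
  refine mul_left_cancel₀ h0 ?_
  have hj : algebraMap GaussianInt M i * algebraMap GaussianInt M i = -1 := by
    rw [← map_mul, sqrtd_mul_sqrtd, map_neg, map_one]
  have hdm := congrArg (algebraMap GaussianInt M) hm
  simp only [map_sub, map_add, map_mul, map_pow, map_one, map_ofNat] at hdm hθ hγ ⊢
  set j := algebraMap GaussianInt M i
  set m' := algebraMap GaussianInt M m
  linear_combination ((1 + j) * θ + γ - 1) * hθ + hγ + hdm +
    ((1 + j) * θ + 4 * m' - 1 + 2 * j * m') * hj

variable {K M : Type*} [Field K] [Field M] [Algebra GaussianInt K] [IsFractionRing GaussianInt K]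
  [Algebra K M] [Algebra GaussianInt M] [IsScalarTower GaussianInt K M] {γ θ : M} {d : GaussianInt}

theorem exists_eq_algebraMap_add_algebraMap_mul_of_isIntegral (hdim : Module.finrank K M = 2)
    (hγK : γ ∉ Set.range (algebraMap K M)) (hsq : Squarefree d) (hd : 4 ∣ d - (1 + 2 * i))
    (hγ : γ ^ 2 = algebraMap GaussianInt M d)
    (hθ : algebraMap GaussianInt M (1 + i) * θ = 1 + γ) {x : M} (hx : IsIntegral GaussianInt x) :
    ∃ α β : GaussianInt, x = algebraMap GaussianInt M α + algebraMap GaussianInt M β * θ := by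
  obtain ⟨s, t, hst, h2x⟩ := exists_two_mul_eq_of_isIntegral hdim hγK hsq hγ hx
  obtain ⟨⟨β, rfl⟩, ⟨α, hα⟩⟩ := dvd_of_four_dvd_sq_sub_sq_mul hd hst
  have h20 : algebraMap GaussianInt M 2 ≠ 0 :=
    (map_ne_zero_iff _ (algebraMap_injective_of_isFractionRing (K := K))).mpr two_ne_zero
  refine ⟨α, β, mul_left_cancel₀ h20 ?_⟩
  have h2 : algebraMap GaussianInt M (1 - i) * algebraMap GaussianInt M (1 + i) =
      algebraMap GaussianInt M 2 := by
    rw [← map_mul, show (1 - i) * (1 + i) = 2 by decide]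
  have hs : algebraMap GaussianInt M s =
      algebraMap GaussianInt M 2 * algebraMap GaussianInt M α +
        algebraMap GaussianInt M (1 - i) * algebraMap GaussianInt M β := by
    rw [← map_mul, ← map_mul, ← map_add, ← hα]
    ring_nf
  rw [h2x, hs, map_mul]
  linear_combination algebraMap GaussianInt M β * θ * h2 -
    algebraMap GaussianInt M (1 - i) * algebraMap GaussianInt M β * hθ

theorem discr_one_of_one_add_I_mul_eq (hdim : Module.finrank K M = 2)
    (hγK : γ ∉ Set.range (algebraMap K M)) (hγ : γ ^ 2 = algebraMap GaussianInt M d)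
    (hθ : algebraMap GaussianInt M (1 + i) * θ = 1 + γ) :
    Algebra.discr K ![1, θ] = algebraMap GaussianInt K (-(2 * i * d)) := by
  set a := algebraMap GaussianInt K (1 + i)
  have ha : a ≠ 0 :=
    (map_ne_zero_iff _ (IsFractionRing.injective GaussianInt K)).mpr (by decide)
  have hθa : θ = algebraMap K M a⁻¹ + algebraMap K M a⁻¹ * γ := by
    calc θ = algebraMap K M (a⁻¹ * a) * θ := by rw [inv_mul_cancel₀ ha, map_one, one_mul]
      _ = algebraMap K M a⁻¹ * (1 + γ) := by
        rw [map_mul, mul_assoc, ← IsScalarTower.algebraMap_apply, hθ]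
      _ = _ := by ring
  have hγ' : γ ^ 2 = algebraMap K M (algebraMap GaussianInt K d) := by
    rw [hγ, IsScalarTower.algebraMap_apply GaussianInt K M]
  rw [hθa, discr_one_algebraMap_add_algebraMap_mul hdim hγK hγ']
  field_simp
  rw [← map_pow, ← map_mul, ← map_ofNat (algebraMap GaussianInt K) 4, ← map_mul]
  congr 1
  linear_combination (4 * d + 2 * i * d) * sqrtd_mul_sqrtd

theorem exists_basis_integralClosure (hdim : Module.finrank K M = 2)
    (hγK : γ ∉ Set.range (algebraMap K M)) (hsq : Squarefree d) (hd : 4 ∣ d - (1 + 2 * i))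
    (hγ : γ ^ 2 = algebraMap GaussianInt M d)
    (hθ : algebraMap GaussianInt M (1 + i) * θ = 1 + γ) :
    ∃ b : Module.Basis (Fin 2) GaussianInt (integralClosure GaussianInt M),
      (b 0 : M) = 1 ∧ (b 1 : M) = θ := by
  have hθint := isIntegral_of_one_add_I_mul_eq (algebraMap_injective_of_isFractionRing (K := K))
    hd hγ hθ
  let v : Fin 2 → integralClosure GaussianInt M := ![1, ⟨θ, hθint⟩]
  have hθK : θ ∉ Set.range (algebraMap K M) := by
    rintro ⟨k, rfl⟩
    refine hγK ⟨algebraMap GaussianInt K (1 + i) * k - 1, ?_⟩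
    rw [map_sub, map_mul, ← IsScalarTower.algebraMap_apply, hθ, map_one, add_sub_cancel_left]
  have hli : LinearIndependent GaussianInt v := by
    refine LinearIndependent.of_comp (integralClosure GaussianInt M).val.toLinearMap ?_
    convert (linearIndependent_one_of_notMem_range hθK).restrict_scalars' GaussianInt
    ext j
    fin_cases j <;> rfl
  have hsp : ⊤ ≤ Submodule.span GaussianInt (Set.range v) := by
    rintro ⟨x, hx⟩ -
    obtain ⟨α, β, hαβ⟩ :=
      exists_eq_algebraMap_add_algebraMap_mul_of_isIntegral hdim hγK hsq hd hγ hθ hx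
    have hx' : (⟨x, hx⟩ : integralClosure GaussianInt M) = α • v 0 + β • v 1 :=
      Subtype.ext (by simp [v, hαβ, Algebra.smul_def])
    rw [hx']
    exact add_mem (Submodule.smul_mem _ _ (Submodule.subset_span ⟨0, rfl⟩))
      (Submodule.smul_mem _ _ (Submodule.subset_span ⟨1, rfl⟩))
  exact ⟨.mk hli hsp, by simp [v], by simp [v]⟩

end GaussianInt

theorem quadratic_basis_of_fh_cong_one_add_two_I_general
    (f h : GaussianInt) (hf : Squarefree f) (hh : Squarefree h) (hfh : IsCoprime f h)
    (K M : Type*) [Field K] [Field M]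
    [Algebra GaussianInt K] [IsFractionRing GaussianInt K]
    [Algebra K M] [Algebra GaussianInt M] [IsScalarTower GaussianInt K M]
    (hdim : Module.finrank K M = 2)
    (γ : M) (hγ : γ ^ 2 = algebraMap GaussianInt M (f * h))
    (hgen : Algebra.adjoin K {γ} = ⊤)
    (hcong : (4 : GaussianInt) ∣ (f * h - (1 + 2 * Zsqrtd.sqrtd))) :
    (∃ b : Module.Basis (Fin 2) GaussianInt (integralClosure GaussianInt M),
      (b 0 : M) = 1 ∧ algebraMap GaussianInt M (1 + Zsqrtd.sqrtd) * (b 1 : M) = 1 + γ) ∧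
    (∀ (b : Module.Basis (Fin 2) GaussianInt (integralClosure GaussianInt M))
        (D : GaussianInt),
        algebraMap GaussianInt K D = Algebra.discr K (fun i : Fin 2 => (b i : M)) →
        Ideal.span {D} = Ideal.span {(2 * (f * h) : GaussianInt)}) := by
  have hγK := notMem_range_algebraMap_of_adjoin_eq_top hdim hgen
  have hsq : Squarefree (f * h) := squarefree_mul_iff.mpr ⟨hfh.isRelPrime, hf, hh⟩
  have hunit : algebraMap GaussianInt M (1 + Zsqrtd.sqrtd) ≠ 0 :=
    (map_ne_zero_iff _ (algebraMap_injective_of_isFractionRing (K := K))).mpr (by decide)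
  obtain ⟨θ, hθ⟩ : ∃ θ : M, algebraMap GaussianInt M (1 + Zsqrtd.sqrtd) * θ = 1 + γ :=
    ⟨_, mul_inv_cancel_left₀ hunit _⟩
  obtain ⟨b₀, hb₀0, hb₀1⟩ := GaussianInt.exists_basis_integralClosure hdim hγK hsq hcong hγ hθ
  refine ⟨⟨b₀, hb₀0, hb₀1 ▸ hθ⟩, fun b D hD => ?_⟩
  have hb₀ : (b₀ · : Fin 2 → M) = ![1, θ] := by
    ext j
    fin_cases j <;> simp [hb₀0, hb₀1]
  have hD₀ := GaussianInt.discr_one_of_one_add_I_mul_eq hdim hγK hγ hθ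
  rw [← hb₀] at hD₀
  rw [span_singleton_eq_of_algebraMap_eq_discr b₀ b hD₀.symm hD,
    Ideal.span_singleton_eq_span_singleton]
  exact ⟨⟨Zsqrtd.sqrtd, -Zsqrtd.sqrtd, by decide, by decide⟩,
    by linear_combination -2 * (f * h) * GaussianInt.sqrtd_mul_sqrtd⟩

/-- If `fh ≡ 1+2i (mod 4ℤ[i])`, then `{1, (1+γ)/(1+i)}` is a `ℤ[i]`-basis of `O_M` and the relative discriminant ideal of `M/K` is generated by `2fh`. -/
theorem quadratic_basis_of_fh_cong_one_add_two_I
    (f h : GaussianInt) (hf : Squarefree f) (hh : Squarefree h) (hfh : IsCoprime f h)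
    (K M : Type*) [Field K] [Field M]
    [Algebra GaussianInt K] [IsFractionRing GaussianInt K]
    [Algebra K M] [Algebra GaussianInt M] [IsScalarTower GaussianInt K M]
    [FiniteDimensional K M] (hdim : Module.finrank K M = 2)
    (γ : M) (hγ : γ ^ 2 = algebraMap GaussianInt M (f * h))
    (hgen : Algebra.adjoin K {γ} = ⊤)
    (hcong : (4 : GaussianInt) ∣ (f * h - (1 + 2 * Zsqrtd.sqrtd))) :
    (∃ b : Module.Basis (Fin 2) GaussianInt (integralClosure GaussianInt M),
      (b 0 : M) = 1 ∧ algebraMap GaussianInt M (1 + Zsqrtd.sqrtd) * (b 1 : M) = 1 + γ) ∧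
    (∀ (b : Module.Basis (Fin 2) GaussianInt (integralClosure GaussianInt M))
        (D : GaussianInt),
        algebraMap GaussianInt K D = Algebra.discr K (fun i : Fin 2 => (b i : M)) →
        Ideal.span {D} = Ideal.span {(2 * (f * h) : GaussianInt)}) :=
  quadratic_basis_of_fh_cong_one_add_two_I_general f h hf hh hfh K M hdim γ hγ hgen hcong
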